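/- arXiv:2211.09749 — 2 statements merged into one kernel-verified Lean document; each statement's English description precedes it below -/
import Mathlib

section
/- The L² norm squared of the derivative of the kink is ∫_ℝ (H'_{0,1}(x))² dx = 1/(2√2), where H_{0,1}(x) = e^{√2 x}/(1+e^{2√2 x})^{1/2}. -/
open Real MeasureTheory

noncomputable def H (x : ℝ) : ℝ :=
  Real.exp (Real.sqrt 2 * x) / Real.sqrt (1 + Real.exp (2 * Real.sqrt 2 * x))

/-! With `u = exp (2√2 x)` one has `H'(x)² = 2u / (1 + u)³`. For `a > 0` and `n ≥ 1`,
`exp (a x) / (1 + exp (a x))^(n+1)` is the derivative of `-1 / (n a (1 + exp (a x))^n)`, which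
increases from `-1 / (n a)` at `-∞` to `0` at `+∞`; with `a = 2√2`, `n = 2` this gives
`∫ H'² = 2 / (2 · 2√2)`. -/

open Filter Topology

theorem integrable_deriv_of_nonneg_of_tendsto {g g' : ℝ → ℝ} {m n : ℝ}
    (hderiv : ∀ x, HasDerivAt g (g' x) x) (hg' : ∀ x, 0 ≤ g' x)
    (hbot : Tendsto g atBot (𝓝 m)) (htop : Tendsto g atTop (𝓝 n)) : Integrable g' := by
  have hint (a b : ℝ) : IntervalIntegrable g' volume a b :=
    intervalIntegral.intervalIntegrable_deriv_of_nonneg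
      (HasDerivAt.continuousOn fun x _ => hderiv x) (fun x _ => hderiv x) fun x _ => hg' x
  refine integrable_of_intervalIntegral_norm_tendsto (n - m) (fun i => (hint (-i) i).1)
    tendsto_neg_atTop_atBot tendsto_id ?_
  have hFTC (i : ℝ) : ∫ x in -i..i, ‖g' x‖ = g i - g (-i) := by
    simp only [Real.norm_of_nonneg (hg' _)]
    exact intervalIntegral.integral_eq_sub_of_hasDerivAt (fun x _ => hderiv x) (hint _ _)
  simp only [hFTC]
  exact htop.sub (hbot.comp tendsto_neg_atTop_atBot)

theorem hasDerivAt_one_add_exp_mul (a x : ℝ) :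
    HasDerivAt (fun x => 1 + exp (a * x)) (a * exp (a * x)) x := by
  simpa [mul_comm] using (((hasDerivAt_id x).const_mul a).exp).const_add 1

theorem hasDerivAt_neg_one_div_one_add_exp_mul_pow {a : ℝ} {n : ℕ} (ha : a ≠ 0) (hn : n ≠ 0)
    (x : ℝ) :
    HasDerivAt (fun x => -1 / (n * a * (1 + exp (a * x)) ^ n))
      (exp (a * x) / (1 + exp (a * x)) ^ (n + 1)) x := by
  have hpos : 0 < 1 + exp (a * x) := by positivity
  have hden := ((hasDerivAt_one_add_exp_mul a x).fun_pow n).const_mul ((n : ℝ) * a)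
  refine ((hasDerivAt_const x (-1 : ℝ)).fun_div hden
    (mul_ne_zero (mul_ne_zero (Nat.cast_ne_zero.2 hn) ha) (pow_ne_zero _ hpos.ne'))).congr_deriv ?_
  obtain ⟨k, rfl⟩ := Nat.exists_eq_add_one_of_ne_zero hn
  rw [Nat.add_sub_cancel]
  field_simp
  ring

theorem integral_exp_mul_div_one_add_exp_mul_pow {a : ℝ} {n : ℕ} (ha : 0 < a) (hn : n ≠ 0) :
    ∫ x, exp (a * x) / (1 + exp (a * x)) ^ (n + 1) = 1 / (n * a) := by
  have hexp_bot : Tendsto (fun x => exp (a * x)) atBot (𝓝 0) :=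
    tendsto_exp_atBot.comp (tendsto_id.const_mul_atBot ha)
  have hexp_top : Tendsto (fun x => exp (a * x)) atTop atTop :=
    tendsto_exp_atTop.comp (tendsto_id.const_mul_atTop ha)
  have hbot : Tendsto (fun x => -1 / (n * a * (1 + exp (a * x)) ^ n)) atBot
      (𝓝 (-1 / (n * a * (1 + 0) ^ n))) :=
    tendsto_const_nhds.div (tendsto_const_nhds.mul ((tendsto_const_nhds.add hexp_bot).pow n))
      (by positivity)
  have htop : Tendsto (fun x => -1 / (n * a * (1 + exp (a * x)) ^ n)) atTop (𝓝 0) :=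
    tendsto_const_nhds.div_atTop <| Tendsto.const_mul_atTop (by positivity) <|
      (tendsto_pow_atTop hn).comp (tendsto_atTop_add_const_left _ 1 hexp_top)
  have hderiv := hasDerivAt_neg_one_div_one_add_exp_mul_pow ha.ne' hn
  rw [integral_of_hasDerivAt_of_tendsto hderiv
    (integrable_deriv_of_nonneg_of_tendsto hderiv (fun x => by positivity) hbot htop) hbot htop,
    add_zero, one_pow, mul_one]
  ring

theorem hasDerivAt_H (x : ℝ) :
    HasDerivAt H (√2 * exp (√2 * x) / √(1 + exp (2 * √2 * x)) ^ 3) x := by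
  have hsq : √(1 + exp (2 * √2 * x)) ^ 2 = 1 + exp (2 * √2 * x) := sq_sqrt (by positivity)
  have hnum : HasDerivAt (fun x => exp (√2 * x)) (√2 * exp (√2 * x)) x := by
    simpa [mul_comm] using ((hasDerivAt_id x).const_mul √2).exp
  have hden := (hasDerivAt_one_add_exp_mul (2 * √2) x).sqrt (by positivity)
  refine (hnum.div hden (by positivity)).congr_deriv ?_
  have hs : 0 < √(1 + exp (2 * √2 * x)) := by positivity
  generalize √(1 + exp (2 * √2 * x)) = s at hs hsq ⊢
  generalize exp (2 * √2 * x) = u at hsq ⊢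
  field_simp
  linear_combination hsq

theorem deriv_H_sq (x : ℝ) :
    deriv H x ^ 2 = 2 * (exp (2 * √2 * x) / (1 + exp (2 * √2 * x)) ^ 3) := by
  have hsq : √(1 + exp (2 * √2 * x)) ^ 2 = 1 + exp (2 * √2 * x) := sq_sqrt (by positivity)
  have hexp : exp (√2 * x) ^ 2 = exp (2 * √2 * x) := by
    rw [← exp_nat_mul]
    ring_nf
  rw [(hasDerivAt_H x).deriv, div_pow, mul_pow, sq_sqrt zero_le_two, hexp, ← pow_mul, pow_mul',
    hsq]
  ring

theorem kink_derivative_L2_norm_sq :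
    ∫ x : ℝ, (deriv H x) ^ 2 = 1 / (2 * Real.sqrt 2) := by
  simp only [deriv_H_sq, integral_const_mul]
  rw [integral_exp_mul_div_one_add_exp_mul_pow (n := 2) (by positivity) two_ne_zero]
  field_simp
  norm_num
end

section
/- For any real numbers x₁ < x₂ with z = x₂ - x₁ > 0, any α > 0, and any natural number m, there exists a constant C depending only on α and m such that ∫_ℝ |x - x₁|^m e^{-α(x-x₁)₊} e^{-α(x₂-x)₊} dx ≤ C (1 + z^{m+1}) e^{-αz}, where y₊ = max(y, 0). -/
/-!
Write `z = x₂ - x₁` and `d(x)` for the distance from `x` to `[x₁, x₂]`. The two exponents add up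
to `-α (z + d(x))`, and `|x - x₁| ≤ z + d(x) ≤ (1 + z)(1 + d(x))`, so the integrand is at most
`e^{-αz} (1 + z)^m h(d(x))` with `h(t) = (1 + t)^m e^{-αt}`. Any nonnegative profile `h ∘ d`
integrates to at most `z h(0)` (the interval itself) plus `4 ∫₀^∞ h` (the two tails), and
`(1 + z)^m (z + 4 ∫₀^∞ h) ≤ 2^m (1 + 4 ∫₀^∞ h) (1 + z^{m+1})`.
-/

open Real MeasureTheory Set

theorem integrable_comp_abs_of_integrableOn_Ioi {E : Type*} [NormedAddCommGroup E] {f : ℝ → E}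
    (hf : IntegrableOn f (Ioi 0)) : Integrable fun x => f |x| := by
  have hIoi : IntegrableOn (fun x => f |x|) (Ioi 0) :=
    hf.congr_fun (fun x hx => by rw [abs_of_pos hx]) measurableSet_Ioi
  have hIic : IntegrableOn (fun x => f |x|) (Iic 0) := by
    rw [← Measure.map_neg_eq_self (volume : Measure ℝ),
      measurableEmbedding_neg.integrableOn_map_iff]
    simp_rw [Function.comp_def, abs_neg, neg_preimage, neg_Iic, neg_zero]
    exact (integrableOn_Ici_iff_integrableOn_Ioi).mpr hIoi
  rw [← integrableOn_univ, ← Iic_union_Ioi (a := (0 : ℝ))]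
  exact hIic.union hIoi

theorem integrableOn_one_add_pow_mul_exp_neg_mul {α : ℝ} (hα : 0 < α) (m : ℕ) :
    IntegrableOn (fun t : ℝ => (1 + t) ^ m * exp (-α * t)) (Ioi 0) := by
  have hpow (k : ℕ) : IntegrableOn (fun t : ℝ => t ^ k * exp (-α * t)) (Ioi 0) := by
    simpa using integrableOn_rpow_mul_exp_neg_mul_rpow (s := k) (p := 1)
      (by linarith [k.cast_nonneg (α := ℝ)]) one_pos hα
  simp_rw [add_comm (1 : ℝ), add_pow, one_pow, mul_one, Finset.sum_mul]
  refine integrable_finsetSum _ fun k _ => ?_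
  simpa only [mul_right_comm] using (hpow k).mul_const (m.choose k : ℝ)

def distIcc (a b x : ℝ) : ℝ := max (a - x) 0 + max (x - b) 0

section distIcc

variable {a b : ℝ}

theorem distIcc_nonneg (x : ℝ) : 0 ≤ distIcc a b x := by
  unfold distIcc; positivity

theorem max_sub_add_max_sub_eq_sub_add_distIcc (hab : a ≤ b) (x : ℝ) :
    max (x - a) 0 + max (b - x) 0 = (b - a) + distIcc a b x := by
  unfold distIcc
  simp only [max_def]
  split_ifs <;> linarith

theorem abs_sub_le_sub_add_distIcc (hab : a ≤ b) (x : ℝ) :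
    |x - a| ≤ (b - a) + distIcc a b x := by
  unfold distIcc
  rw [abs_le]
  constructor <;> simp only [max_def] <;> split_ifs <;> linarith

theorem comp_distIcc_le {h : ℝ → ℝ} (hh : ∀ t, 0 ≤ t → 0 ≤ h t) (hab : a ≤ b) (x : ℝ) :
    h (distIcc a b x) ≤ (Icc a b).indicator (fun _ => h 0) x + h |x - a| + h |x - b| := by
  have h₁ := hh |x - a| (abs_nonneg _)
  have h₂ := hh |x - b| (abs_nonneg _)
  have h₃ : 0 ≤ (Icc a b).indicator (fun _ => h 0) x :=
    indicator_nonneg (fun _ _ => hh 0 le_rfl) x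
  unfold distIcc
  rcases lt_or_ge x a with hxa | hax
  · rw [max_eq_left (by linarith), max_eq_right (by linarith), add_zero,
      abs_of_neg (by linarith : x - a < 0), neg_sub]
    linarith
  rcases le_or_gt x b with hxb | hbx
  · rw [max_eq_right (by linarith), max_eq_right (by linarith), add_zero,
      indicator_of_mem (show x ∈ Icc a b from ⟨hax, hxb⟩)]
    linarith
  · rw [max_eq_right (by linarith), max_eq_left (by linarith), zero_add,
      abs_of_pos (by linarith : 0 < x - b)]
    linarith

theorem integral_le_of_le_comp_distIcc {f h : ℝ → ℝ} (hf : ∀ x, 0 ≤ f x)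
    (hfh : ∀ x, f x ≤ h (distIcc a b x)) (hh : ∀ t, 0 ≤ t → 0 ≤ h t)
    (hh_int : IntegrableOn h (Ioi 0)) (hab : a ≤ b) :
    ∫ x, f x ≤ (b - a) * h 0 + 4 * ∫ t in Ioi 0, h t := by
  have hind : Integrable ((Icc a b).indicator fun _ => h 0) :=
    (integrable_indicator_iff measurableSet_Icc).mpr (integrableOn_const measure_Icc_lt_top.ne)
  have hsub (c : ℝ) : Integrable fun x => h |x - c| :=
    (integrable_comp_abs_of_integrableOn_Ioi hh_int).comp_sub_right c
  have hinda : Integrable fun x => (Icc a b).indicator (fun _ => h 0) x + h |x - a| :=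
    hind.add (hsub a)
  calc ∫ x, f x
      ≤ ∫ x, ((Icc a b).indicator (fun _ => h 0) x + h |x - a| + h |x - b|) :=
        integral_mono_of_nonneg (.of_forall hf) (hinda.add (hsub b))
          (.of_forall fun x => (hfh x).trans (comp_distIcc_le hh hab x))
    _ = (b - a) * h 0 + 2 * (∫ t in Ioi 0, h t) + 2 * ∫ t in Ioi 0, h t := by
        rw [integral_add hinda (hsub b), integral_add hind (hsub a),
          integral_indicator_const _ measurableSet_Icc, volume_real_Icc_of_le hab, smul_eq_mul,
          integral_sub_right_eq_self (fun x => h |x|), integral_sub_right_eq_self (fun x => h |x|),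
          integral_comp_abs]
    _ = (b - a) * h 0 + 4 * ∫ t in Ioi 0, h t := by ring

theorem pow_abs_sub_mul_exp_mul_exp_le {α : ℝ} (m : ℕ) (hab : a ≤ b) (x : ℝ) :
    |x - a| ^ m * exp (-α * max (x - a) 0) * exp (-α * max (b - x) 0) ≤
      (1 + (b - a)) ^ m * exp (-α * (b - a)) *
        ((1 + distIcc a b x) ^ m * exp (-α * distIcc a b x)) := by
  have hexp : exp (-α * max (x - a) 0) * exp (-α * max (b - x) 0) =
      exp (-α * (b - a)) * exp (-α * distIcc a b x) := by
    rw [← exp_add, ← exp_add, ← mul_add, max_sub_add_max_sub_eq_sub_add_distIcc hab, mul_add]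
  have hpow : |x - a| ^ m ≤ ((1 + (b - a)) * (1 + distIcc a b x)) ^ m := by
    refine pow_le_pow_left₀ (abs_nonneg _) ?_ m
    nlinarith [abs_sub_le_sub_add_distIcc hab x,
      mul_nonneg (sub_nonneg.mpr hab) (distIcc_nonneg (a := a) (b := b) x)]
  calc |x - a| ^ m * exp (-α * max (x - a) 0) * exp (-α * max (b - x) 0)
      = |x - a| ^ m * (exp (-α * (b - a)) * exp (-α * distIcc a b x)) := by
        rw [mul_assoc, hexp]
    _ ≤ ((1 + (b - a)) * (1 + distIcc a b x)) ^ m *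
          (exp (-α * (b - a)) * exp (-α * distIcc a b x)) := by gcongr
    _ = _ := by rw [mul_pow]; ring

end distIcc

theorem one_add_pow_mul_add_le {z A : ℝ} (hz : 0 ≤ z) (hA : 0 ≤ A) (m : ℕ) :
    (1 + z) ^ m * (z + A) ≤ 2 ^ m * (1 + A) * (1 + z ^ (m + 1)) := by
  have hbinom : (1 + z) ^ (m + 1) ≤ 2 ^ m * (1 + z ^ (m + 1)) := by
    simpa using add_pow_le zero_le_one hz (m + 1)
  calc (1 + z) ^ m * (z + A) ≤ (1 + z) ^ m * ((1 + z) * (1 + A)) := by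
        gcongr; nlinarith
    _ = (1 + z) ^ (m + 1) * (1 + A) := by ring
    _ ≤ 2 ^ m * (1 + z ^ (m + 1)) * (1 + A) := by gcongr
    _ = _ := by ring

theorem interaction_integral_bound_equal_rates (α : ℝ) (m : ℕ) (hα : 0 < α) :
    ∃ C : ℝ, 0 < C ∧ ∀ x₁ x₂ : ℝ, x₁ < x₂ →
      (∫ x : ℝ, |x - x₁| ^ m * Real.exp (-α * max (x - x₁) 0) *
          Real.exp (-α * max (x₂ - x) 0)) ≤
        C * (1 + (x₂ - x₁) ^ (m + 1)) * Real.exp (-α * (x₂ - x₁)) := by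
  set A := ∫ t in Ioi 0, (1 + t) ^ m * exp (-α * t)
  have hA : 0 ≤ A := setIntegral_nonneg measurableSet_Ioi fun t (ht : 0 < t) => by positivity
  refine ⟨2 ^ m * (1 + 4 * A), by positivity, fun x₁ x₂ hx => ?_⟩
  set c := (1 + (x₂ - x₁)) ^ m * exp (-α * (x₂ - x₁)) with hc
  calc _ ≤ (x₂ - x₁) * (c * ((1 + 0) ^ m * exp (-α * 0))) +
        4 * ∫ t in Ioi 0, c * ((1 + t) ^ m * exp (-α * t)) :=
        integral_le_of_le_comp_distIcc (fun x => by positivity)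
          (pow_abs_sub_mul_exp_mul_exp_le m hx.le) (fun t ht => by positivity)
          ((integrableOn_one_add_pow_mul_exp_neg_mul hα m).const_mul c) hx.le
    _ = (1 + (x₂ - x₁)) ^ m * ((x₂ - x₁) + 4 * A) * exp (-α * (x₂ - x₁)) := by
        rw [integral_const_mul, add_zero, one_pow, mul_zero, exp_zero, mul_one, hc]
        ring
    _ ≤ _ := mul_le_mul_of_nonneg_right
        (one_add_pow_mul_add_le (sub_nonneg.mpr hx.le) (by positivity) m) (exp_pos _).le
end
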